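/- Let K ⊆ ℂ² be a bombon (every complex line meets K in the empty set or a closed disk) contained in the closed unit ball B of ℂ², and suppose B is an ellipsoid containing K. Then K ∩ S³ is linearly closed in S³: for any two distinct points x, y ∈ K ∩ S³, the full intersection with S³ of the complex line through x and y is contained in K. -/

import Mathlib

def IsBombon {n : ℕ} (K : Set (EuclideanSpace ℂ (Fin n))) : Prop :=
  ∀ p v : EuclideanSpace ℂ (Fin n), v ≠ 0 →
    {x | ∃ z : ℂ, x = p + z • v} ∩ K = ∅ ∨
    (∃ (c : EuclideanSpace ℂ (Fin n)) (r : ℝ), 0 ≤ r ∧ (∃ z : ℂ, c = p + z • v) ∧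
      {x | ∃ z : ℂ, x = p + z • v} ∩ K = {x | ∃ z : ℂ, ‖z‖ ≤ r ∧ x = c + z • v})

/-!
On the complex line through `x` and `y`, parametrised by `z ↦ x + z • (y - x)`, the squared norm
is an affine function of `|z - z₀|²` with positive slope, so the unit ball and the unit sphere pull
back to a disk `D₀` and its boundary circle, and `0`, `1` lie on that circle. The bombon pulls back
to a disk `D ⊆ D₀` containing `0` and `1`. In a strictly convex space a ball inside another ball
with a different centre touches the outer sphere in at most one point, so `D` and `D₀` are
concentric; as `D` reaches `∂D₀`, it contains `∂D₀`.
-/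

open Metric Set

section Disks

variable {E : Type*} [NormedAddCommGroup E] [NormedSpace ℝ E]

lemma add_dist_le_of_closedBall_subset_closedBall [Nontrivial E] {c c₀ : E} {r ρ : ℝ}
    (h : closedBall c r ⊆ closedBall c₀ ρ) (hr : 0 ≤ r) : r + dist c c₀ ≤ ρ := by
  obtain ⟨u, hu, hcu⟩ : ∃ u : E, ‖u‖ = 1 ∧ c - c₀ = dist c c₀ • u := by
    rcases eq_or_ne c c₀ with rfl | hne
    · obtain ⟨u, hu⟩ := exists_norm_eq E zero_le_one
      exact ⟨u, hu, by simp⟩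
    · have hd : dist c c₀ ≠ 0 := dist_ne_zero.2 hne
      refine ⟨(dist c c₀)⁻¹ • (c - c₀), ?_, ?_⟩
      · rw [norm_smul, ← dist_eq_norm, norm_inv, Real.norm_of_nonneg dist_nonneg,
          inv_mul_cancel₀ hd]
      · rw [smul_smul, mul_inv_cancel₀ hd, one_smul]
  have hfar := h (show c + r • u ∈ closedBall c r by
    rw [mem_closedBall, dist_eq_norm, add_sub_cancel_left, norm_smul, hu, mul_one,
      Real.norm_of_nonneg hr])
  rw [mem_closedBall, dist_eq_norm, add_sub_right_comm, hcu, ← add_smul, norm_smul, hu, mul_one,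
    Real.norm_of_nonneg (by positivity)] at hfar
  linarith

variable [StrictConvexSpace ℝ E]

/-- Every point where the inner ball touches the outer sphere is the point at distance `ρ` from
`c₀` on the ray through `c`. -/
lemma eq_of_mem_closedBall_inter_sphere {c c₀ a b : E} {r ρ : ℝ}
    (h : closedBall c r ⊆ closedBall c₀ ρ) (hne : c ≠ c₀)
    (ha : a ∈ closedBall c r ∩ sphere c₀ ρ) (hb : b ∈ closedBall c r ∩ sphere c₀ ρ) :
    a = b := by
  have : Nontrivial E := ⟨⟨c, c₀, hne⟩⟩
  have hr : 0 ≤ r := dist_nonneg.trans ha.1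
  have hfar := add_dist_le_of_closedBall_subset_closedBall h hr
  have hd : 0 < dist c c₀ := dist_pos.2 hne
  have hρ : 0 < ρ := by linarith
  have hline : ∀ p ∈ closedBall c r ∩ sphere c₀ ρ,
      c = AffineMap.lineMap c₀ p (dist c₀ c / ρ) := by
    rintro p ⟨hpc, hp₀⟩
    rw [mem_closedBall] at hpc
    rw [mem_sphere] at hp₀
    have htri := dist_triangle p c c₀
    apply eq_lineMap_of_dist_eq_mul_of_dist_eq_mul
    · rw [dist_comm c₀ p, hp₀, div_mul_cancel₀ _ hρ.ne']
    · rw [dist_comm c₀ p, hp₀, sub_mul, div_mul_cancel₀ _ hρ.ne', one_mul, dist_comm c₀ c,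
        dist_comm c p]
      linarith
  have hab := (hline a ha).symm.trans (hline b hb)
  rw [AffineMap.lineMap_apply_module', AffineMap.lineMap_apply_module', add_left_inj] at hab
  exact sub_left_injective (smul_right_injective E (div_pos (dist_pos.2 hne.symm) hρ).ne' hab)

lemma sphere_subset_closedBall_of_mem_of_mem {c c₀ a b : E} {r ρ : ℝ}
    (h : closedBall c r ⊆ closedBall c₀ ρ)
    (ha : a ∈ closedBall c r ∩ sphere c₀ ρ) (hb : b ∈ closedBall c r ∩ sphere c₀ ρ)
    (hab : a ≠ b) : sphere c₀ ρ ⊆ closedBall c r := by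
  obtain rfl : c = c₀ := by
    by_contra hne
    exact hab (eq_of_mem_closedBall_inter_sphere h hne ha hb)
  have hρr : ρ ≤ r := (mem_sphere.1 ha.2).symm.trans_le ha.1
  exact sphere_subset_closedBall.trans (closedBall_subset_closedBall hρr)

end Disks

section ComplexLine

variable {E : Type*} [NormedAddCommGroup E] [InnerProductSpace ℂ E]

/-- The parameter of the point of the complex line `z ↦ x + z • v` closest to the origin. -/
noncomputable def lineFootParam (x v : E) : ℂ :=
  -(starRingEnd ℂ (inner ℂ x v)) / ((‖v‖ ^ 2 : ℝ) : ℂ)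

lemma norm_add_smul_sq (x v : E) (z : ℂ) :
    ‖x + z • v‖ ^ 2 =
      ‖x‖ ^ 2 + ‖v‖ ^ 2 * (‖z - lineFootParam x v‖ ^ 2 - ‖lineFootParam x v‖ ^ 2) := by
  set z₀ := lineFootParam x v
  have hz₀ : ((‖v‖ ^ 2 : ℝ) : ℂ) * starRingEnd ℂ z₀ = -inner ℂ x v := by
    rcases eq_or_ne v 0 with rfl | hv
    · simp
    · have : ((‖v‖ ^ 2 : ℝ) : ℂ) ≠ 0 := by exact_mod_cast (pow_pos (norm_pos_iff.2 hv) 2).ne'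
      simp only [z₀, lineFootParam, map_div₀, map_neg, Complex.conj_conj, Complex.conj_ofReal]
      field_simp
  have hdiff : ‖z - z₀‖ ^ 2 - ‖z₀‖ ^ 2 = ‖z‖ ^ 2 - 2 * (z * starRingEnd ℂ z₀).re := by
    simp only [Complex.sq_norm, Complex.normSq_sub]
    ring
  rw [hdiff, norm_add_sq (𝕜 := ℂ), inner_smul_right, norm_smul, mul_sub, mul_pow,
    mul_left_comm _ 2, ← Complex.re_ofReal_mul, mul_left_comm, hz₀]
  simp only [mul_neg, Complex.neg_re, RCLike.re_to_complex]
  ring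

variable {x v : E} {R : ℝ}

lemma preimage_closedBall_of_norm_eq (hv : v ≠ 0) (hx : ‖x‖ = R) :
    (fun z : ℂ ↦ x + z • v) ⁻¹' closedBall 0 R =
      closedBall (lineFootParam x v) ‖lineFootParam x v‖ := by
  have hA : 0 < ‖v‖ ^ 2 := pow_pos (norm_pos_iff.2 hv) 2
  ext z
  rw [mem_preimage, mem_closedBall_zero_iff, mem_closedBall, dist_eq_norm, ← hx,
    ← sq_le_sq₀ (norm_nonneg _) (norm_nonneg _), ← sq_le_sq₀ (norm_nonneg _) (norm_nonneg _),
    norm_add_smul_sq, add_le_iff_nonpos_right, mul_nonpos_iff_pos_imp_nonpos, sub_nonpos]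
  exact ⟨fun h ↦ h.1 hA, fun h ↦ ⟨fun _ ↦ h, fun _ ↦ hA.le⟩⟩

lemma preimage_sphere_of_norm_eq (hv : v ≠ 0) (hx : ‖x‖ = R) :
    (fun z : ℂ ↦ x + z • v) ⁻¹' sphere 0 R =
      sphere (lineFootParam x v) ‖lineFootParam x v‖ := by
  have hA : ‖v‖ ^ 2 ≠ 0 := pow_ne_zero 2 (norm_ne_zero_iff.2 hv)
  ext z
  rw [mem_preimage, mem_sphere_zero_iff_norm, mem_sphere, dist_eq_norm, ← hx,
    ← sq_eq_sq₀ (norm_nonneg _) (norm_nonneg _), ← sq_eq_sq₀ (norm_nonneg _) (norm_nonneg _),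
    norm_add_smul_sq, add_eq_left, mul_eq_zero, sub_eq_zero, or_iff_right hA]

end ComplexLine

lemma IsBombon.exists_preimage_eq_closedBall {n : ℕ} {K : Set (EuclideanSpace ℂ (Fin n))}
    (hK : IsBombon K) {p v : EuclideanSpace ℂ (Fin n)} (hv : v ≠ 0)
    (hmeet : ((fun z : ℂ ↦ p + z • v) ⁻¹' K).Nonempty) :
    ∃ (c : ℂ) (r : ℝ), (fun z : ℂ ↦ p + z • v) ⁻¹' K = closedBall c r := by
  rcases hK p v hv with hemp | ⟨_, r, -, ⟨c, rfl⟩, hdisk⟩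
  · obtain ⟨z, hz⟩ := hmeet
    exact absurd (hemp.subset ⟨⟨z, rfl⟩, hz⟩) (notMem_empty _)
  refine ⟨c, r, Set.ext fun z ↦ ?_⟩
  have hmem : p + z • v ∈ K ↔ p + z • v ∈ {q | ∃ w : ℂ, ‖w‖ ≤ r ∧ q = p + c • v + w • v} := by
    rw [← hdisk]
    exact ⟨fun h ↦ ⟨⟨z, rfl⟩, h⟩, And.right⟩
  rw [mem_preimage, hmem, mem_closedBall, dist_eq_norm]
  constructor
  · rintro ⟨w, hw, hzw⟩
    have hz : z = c + w := smul_left_injective ℂ hv (by simpa [add_smul, add_assoc] using hzw)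
    simpa [hz] using hw
  · exact fun h ↦ ⟨z - c, h, by module⟩

theorem stmt12_general (K : Set (EuclideanSpace ℂ (Fin 2)))
    (hbom : IsBombon K)
    (hsub : K ⊆ Metric.closedBall 0 1)
    (x y : EuclideanSpace ℂ (Fin 2))
    (hx : x ∈ K ∩ Metric.sphere 0 1) (hy : y ∈ K ∩ Metric.sphere 0 1)
    (hxy : x ≠ y) :
    {p | ∃ z : ℂ, p = x + z • (y - x)} ∩ Metric.sphere 0 1 ⊆ K := by
  set φ : ℂ → EuclideanSpace ℂ (Fin 2) := fun z ↦ x + z • (y - x)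
  set z₀ := lineFootParam x (y - x)
  have hv : y - x ≠ 0 := sub_ne_zero.2 hxy.symm
  have hx1 : ‖x‖ = 1 := mem_sphere_zero_iff_norm.1 hx.2
  have hφ0 : φ 0 = x := by simp [φ]
  have hφ1 : φ 1 = y := by simp [φ]
  obtain ⟨c, r, hK⟩ := hbom.exists_preimage_eq_closedBall hv ⟨0, by simpa [hφ0] using hx.1⟩
  have hsphere : φ ⁻¹' sphere 0 1 = sphere z₀ ‖z₀‖ := preimage_sphere_of_norm_eq hv hx1
  have hdisk : closedBall c r ⊆ closedBall z₀ ‖z₀‖ :=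
    hK ▸ preimage_closedBall_of_norm_eq hv hx1 ▸ preimage_mono hsub
  have hmem : ∀ z, φ z ∈ K ∩ sphere 0 1 → z ∈ closedBall c r ∩ sphere z₀ ‖z₀‖ :=
    fun z hz ↦ ⟨hK ▸ hz.1, hsphere ▸ hz.2⟩
  have hcircle : sphere z₀ ‖z₀‖ ⊆ closedBall c r :=
    sphere_subset_closedBall_of_mem_of_mem hdisk (hmem 0 (hφ0 ▸ hx)) (hmem 1 (hφ1 ▸ hy))
      zero_ne_one
  rintro _ ⟨⟨z, rfl⟩, hz⟩
  exact (hK ▸ hcircle (hsphere ▸ hz) : z ∈ φ ⁻¹' K)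

theorem stmt12 (K : Set (EuclideanSpace ℂ (Fin 2)))
    (hconv : Convex ℝ K) (hcomp : IsCompact K) (hbom : IsBombon K)
    (hsub : K ⊆ Metric.closedBall 0 1)
    (x y : EuclideanSpace ℂ (Fin 2))
    (hx : x ∈ K ∩ Metric.sphere 0 1) (hy : y ∈ K ∩ Metric.sphere 0 1)
    (hxy : x ≠ y) :
    {p | ∃ z : ℂ, p = x + z • (y - x)} ∩ Metric.sphere 0 1 ⊆ K :=
  stmt12_general K hbom hsub x y hx hy hxy
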